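/- Fix integers $m, n \ge 1$ and nonnegative integers $T_1, T_2$. Consider the suspension $\hat{Gr}_{m,n}$ of the $m \times n$ grid graph, with edge sets $E_1$ (edges at the apex $w$) and $E_2$ (grid edges). Let $\Sigma' = CUT^{\Box}(\hat{Gr}_{m,n}) \cap \{0,1\}^{|E_1|+|E_2|} \cap \{\mathbf{x} : \sum_{e \in E_1} x_e = T_1,\ \sum_{e \in E_2} x_e = T_2\}$, and let $\pi : \mathbb{R}^{|E_1|+|E_2|} \to \mathbb{R}^{|E_1|}$ be the coordinate projection onto the $E_1$-coordinates. Let $\Sigma = \{x \in \{0,1\}^{mn} : T_1(x) = T_1,\ T_2(x) = T_2\}$, where the $E_1$-coordinate indexed by the edge $\{w, v_{i,j}\}$ is identified with the table cell $(i,j)$. Then $\pi(\Sigma') = \Sigma$. -/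

import Mathlib

/-!
STATEMENT 3: With `Σ′` the set of 0-1 points of the cut polytope of the suspended grid
graph satisfying the two linear constraints for `T₁` and `T₂`, `Σ` the fiber of 0-1 tables with
statistics `(T₁, T₂)`, and `π` the coordinate projection onto the `E₁`-coordinates, we have
`π(Σ′) = Σ`.
-/

/-- Symmetric nearest-neighbor adjacency on the `m × n` grid. -/
def nbr {m n : ℕ} (a b : Fin m × Fin n) : Prop :=
  (a.1 = b.1 ∧ ((a.2 : ℕ) + 1 = (b.2 : ℕ) ∨ (b.2 : ℕ) + 1 = (a.2 : ℕ))) ∨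
  (a.2 = b.2 ∧ ((a.1 : ℕ) + 1 = (b.1 : ℕ) ∨ (b.1 : ℕ) + 1 = (a.1 : ℕ)))

instance {m n : ℕ} : DecidableRel (nbr (m := m) (n := n)) := fun a b => by
  unfold nbr; infer_instance

/-- The `m × n` grid graph `Gr_{m,n}`. -/
def gridGraph (m n : ℕ) : SimpleGraph (Fin m × Fin n) where
  Adj := nbr
  symm := by
    constructor
    intro a b h
    rcases h with ⟨h1, h2⟩ | ⟨h1, h2⟩
    · exact Or.inl ⟨h1.symm, h2.symm⟩
    · exact Or.inr ⟨h1.symm, h2.symm⟩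
  loopless := by
    constructor
    intro a h
    rcases h with ⟨_, h2⟩ | ⟨_, h2⟩ <;> omega

/-- Adjacency of the suspension `Ĝr_{m,n}`: the apex `none` (the vertex `w`) is adjacent to
every grid vertex, and grid vertices keep the grid adjacency. -/
def suspAdj {m n : ℕ} : Option (Fin m × Fin n) → Option (Fin m × Fin n) → Prop
  | none, none => False
  | none, some _ => True
  | some _, none => True
  | some a, some b => nbr a b

instance {m n : ℕ} : DecidableRel (suspAdj (m := m) (n := n)) := fun a b =>
  match a, b with
  | none, none => .isFalse id
  | none, some _ => .isTrue trivial
  | some _, none => .isTrue trivial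
  | some a, some b => inferInstanceAs (Decidable (nbr a b))

/-- The suspension `Ĝr_{m,n}` of the grid graph, with apex vertex `w = none`. -/
def suspGraph (m n : ℕ) : SimpleGraph (Option (Fin m × Fin n)) where
  Adj := suspAdj
  symm := by
    constructor
    intro a b h
    match a, b with
    | none, none => exact h.elim
    | none, some _ => trivial
    | some _, none => trivial
    | some a, some b => exact (gridGraph m n).adj_symm h
  loopless := by
    constructor
    intro a h
    match a with
    | none => exact h
    | some a => exact (gridGraph m n).irrefl h

instance {m n : ℕ} : DecidableRel (suspGraph m n).Adj :=
  inferInstanceAs (DecidableRel (suspAdj (m := m) (n := n)))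

/-- The cut semimetric of the partition `A | Aᶜ`: an edge gets value `1` iff exactly one of
its endpoints lies in `A`. -/
def cutDelta {V : Type*} [DecidableEq V] (A : Finset V) : Sym2 V → ℝ :=
  Sym2.lift ⟨fun u v => if u ∈ A then (if v ∈ A then 0 else 1) else (if v ∈ A then 1 else 0),
    fun u v => by by_cases hu : u ∈ A <;> by_cases hv : v ∈ A <;> simp [hu, hv]⟩

/-- Oriented nearest-neighbor adjacency (right or down neighbor); oriented pairs are in
bijection with unordered adjacent pairs. -/
def adjOr {m n : ℕ} (a b : Fin m × Fin n) : Prop :=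
  (a.1 = b.1 ∧ (a.2 : ℕ) + 1 = (b.2 : ℕ)) ∨ (a.2 = b.2 ∧ (a.1 : ℕ) + 1 = (b.1 : ℕ))

instance {m n : ℕ} : DecidableRel (adjOr (m := m) (n := n)) := fun a b => by
  unfold adjOr; infer_instance

/-- `T₁(x)` for a real-valued table: the sum of all entries. -/
noncomputable def T1R {m n : ℕ} (x : Fin m × Fin n → ℝ) : ℝ := ∑ c, x c

/-- `T₂(x)` for a real-valued table:
`∑_{(i₁,j₁) ∼ (i₂,j₂)} (x_{i₁,j₁}(1 - x_{i₂,j₂}) + x_{i₂,j₂}(1 - x_{i₁,j₁}))`,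
the sum running over unordered adjacent pairs (oriented right/down pairs). -/
noncomputable def T2R {m n : ℕ} (x : Fin m × Fin n → ℝ) : ℝ :=
  ∑ p ∈ Finset.univ.filter
      (fun p : (Fin m × Fin n) × (Fin m × Fin n) => adjOr p.1 p.2),
    (x p.1 * (1 - x p.2) + x p.2 * (1 - x p.1))

/-- The cut vector of `A | Aᶜ`, as a point of `ℝ^{E₁ ∪ E₂}`, the coordinates indexed by the
edges of the suspension graph. -/
noncomputable def cutVec (m n : ℕ) (A : Finset (Option (Fin m × Fin n))) :
    (suspGraph m n).edgeSet → ℝ :=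
  fun e => cutDelta A (e : Sym2 (Option (Fin m × Fin n)))

/-- The cut polytope `CUT□(Ĝr_{m,n})`: the convex hull of the cut semimetrics of all
partitions of the vertex set. -/
noncomputable def cutPolytope (m n : ℕ) : Set ((suspGraph m n).edgeSet → ℝ) :=
  convexHull ℝ {y | ∃ A : Finset (Option (Fin m × Fin n)), y = cutVec m n A}

/-- `E₁`: the edges of the suspension incident to the apex `w = none`. -/
noncomputable def E1 (m n : ℕ) : Finset (suspGraph m n).edgeSet :=
  Finset.univ.filter (fun e : (suspGraph m n).edgeSet =>
    none ∈ (e : Sym2 (Option (Fin m × Fin n))))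

/-- `E₂`: the edges of the suspension not incident to the apex, i.e. the grid edges. -/
noncomputable def E2 (m n : ℕ) : Finset (suspGraph m n).edgeSet :=
  Finset.univ.filter (fun e : (suspGraph m n).edgeSet =>
    ¬ none ∈ (e : Sym2 (Option (Fin m × Fin n))))

/-- `Σ' = CUT□(Ĝr_{m,n}) ∩ {0,1}^{|E₁|+|E₂|} ∩ {x : ∑_{e∈E₁} x_e = T₁, ∑_{e∈E₂} x_e = T₂}`. -/
noncomputable def SigmaPrime (m n : ℕ) (t1 t2 : ℕ) : Set ((suspGraph m n).edgeSet → ℝ) :=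
  {y | y ∈ cutPolytope m n ∧ (∀ e, y e = 0 ∨ y e = 1) ∧
    (∑ e ∈ E1 m n, y e) = (t1 : ℝ) ∧ (∑ e ∈ E2 m n, y e) = (t2 : ℝ)}

/-- The fiber `Σ = {x ∈ {0,1}^{mn} : T₁(x) = T₁, T₂(x) = T₂}` of 0-1 tables. -/
noncomputable def SigmaFiber (m n : ℕ) (t1 t2 : ℕ) : Set (Fin m × Fin n → ℝ) :=
  {x | (∀ c, x c = 0 ∨ x c = 1) ∧ T1R x = (t1 : ℝ) ∧ T2R x = (t2 : ℝ)}

lemma apex_edge_mem {m n : ℕ} (c : Fin m × Fin n) :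
    s(none, some c) ∈ (suspGraph m n).edgeSet := by
  rw [SimpleGraph.mem_edgeSet]; trivial

/-- The coordinate projection `π : ℝ^{E₁ ∪ E₂} → ℝ^{E₁}` onto the `E₁`-coordinates, where the
`E₁`-coordinate indexed by the edge `{w, v_{i,j}}` is identified with the table cell `(i,j)`. -/
noncomputable def projE1 (m n : ℕ) (y : (suspGraph m n).edgeSet → ℝ) :
    Fin m × Fin n → ℝ :=
  fun c => y ⟨s(none, some c), apex_edge_mem c⟩

section Aux

variable {m n : ℕ}

lemma cutDelta_mk {V : Type*} [DecidableEq V] (A : Finset V) (u v : V) :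
    cutDelta A s(u, v) =
      if u ∈ A then (if v ∈ A then 0 else 1) else (if v ∈ A then 1 else 0) := rfl

lemma cutDelta_zero_or_one {V : Type*} [DecidableEq V] (A : Finset V) (e : Sym2 V) :
    cutDelta A e = 0 ∨ cutDelta A e = 1 := by
  induction e using Sym2.ind with
  | _ u v => rw [cutDelta_mk]; split_ifs <;> simp

lemma adjOr_nbr {a b : Fin m × Fin n} (h : adjOr a b) : nbr a b := by
  rcases h with ⟨h1, h2⟩ | ⟨h1, h2⟩
  · exact Or.inl ⟨h1, Or.inl h2⟩
  · exact Or.inr ⟨h1, Or.inl h2⟩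

lemma nbr_or {a b : Fin m × Fin n} (h : nbr a b) : adjOr a b ∨ adjOr b a := by
  rcases h with ⟨h1, h2 | h2⟩ | ⟨h1, h2 | h2⟩
  · exact Or.inl (Or.inl ⟨h1, h2⟩)
  · exact Or.inr (Or.inl ⟨h1.symm, h2⟩)
  · exact Or.inl (Or.inr ⟨h1, h2⟩)
  · exact Or.inr (Or.inr ⟨h1.symm, h2⟩)

lemma adjOr_asymm {a b : Fin m × Fin n} (h : adjOr a b) (h' : adjOr b a) : False := by
  rcases h with ⟨h1, h2⟩ | ⟨h1, h2⟩ <;> rcases h' with ⟨h1', h2'⟩ | ⟨h1', h2'⟩ <;>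
    · have e1 := congrArg Fin.val h1
      have e2 := congrArg Fin.val h1'
      omega

lemma grid_edge_mem {a b : Fin m × Fin n} (h : nbr a b) :
    s(some a, some b) ∈ (suspGraph m n).edgeSet := by
  rw [SimpleGraph.mem_edgeSet]; exact h

lemma sum_E1_eq (f : Sym2 (Option (Fin m × Fin n)) → ℝ) :
    ∑ e ∈ E1 m n, f (e : Sym2 (Option (Fin m × Fin n))) =
      ∑ c : Fin m × Fin n, f s(none, some c) := by
  refine (Finset.sum_bij (fun c _ => (⟨s(none, some c), apex_edge_mem c⟩ :
      (suspGraph m n).edgeSet)) ?_ ?_ ?_ ?_).symm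
  · intro c _
    simp [E1]
  · intro c₁ _ c₂ _ h
    have h' : s((none : Option (Fin m × Fin n)), some c₁) = s(none, some c₂) :=
      congrArg Subtype.val h
    rw [Sym2.eq_iff] at h'
    rcases h' with ⟨_, h2⟩ | ⟨h2, _⟩
    · exact Option.some_injective _ h2
    · exact absurd h2 (by simp)
  · rintro ⟨e, he⟩ hmem
    induction e using Sym2.ind with
    | _ u v =>
      have hne : (none : Option (Fin m × Fin n)) ∈ s(u, v) := by
        simpa [E1] using hmem
      rw [Sym2.mem_iff] at hne
      rcases hne with rfl | rfl
      · match v, he with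
        | some c, he => exact ⟨c, Finset.mem_univ c, rfl⟩
      · match u, he with
        | some c, he =>
          exact ⟨c, Finset.mem_univ c, Subtype.ext Sym2.eq_swap⟩
  · intro c _
    rfl

lemma sum_E2_eq (f : Sym2 (Option (Fin m × Fin n)) → ℝ) :
    ∑ e ∈ E2 m n, f (e : Sym2 (Option (Fin m × Fin n))) =
      ∑ p ∈ Finset.univ.filter
          (fun p : (Fin m × Fin n) × (Fin m × Fin n) => adjOr p.1 p.2),
        f s(some p.1, some p.2) := by
  refine (Finset.sum_bij (fun p hp => (⟨s(some p.1, some p.2),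
      grid_edge_mem (adjOr_nbr (by simpa using hp))⟩ : (suspGraph m n).edgeSet)) ?_ ?_ ?_ ?_).symm
  · intro p _
    simp [E2]
  · intro p₁ hp₁ p₂ hp₂ h
    have ha₁ : adjOr p₁.1 p₁.2 := by simpa using hp₁
    have ha₂ : adjOr p₂.1 p₂.2 := by simpa using hp₂
    have h' : s((some p₁.1 : Option (Fin m × Fin n)), some p₁.2) = s(some p₂.1, some p₂.2) :=
      congrArg Subtype.val h
    rw [Sym2.eq_iff] at h'
    rcases h' with ⟨h1, h2⟩ | ⟨h1, h2⟩
    · exact Prod.ext (Option.some_injective _ h1) (Option.some_injective _ h2)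
    · exfalso
      have e1 : p₁.1 = p₂.2 := Option.some_injective _ h1
      have e2 : p₁.2 = p₂.1 := Option.some_injective _ h2
      rw [e1, e2] at ha₁
      exact adjOr_asymm ha₂ ha₁
  · rintro ⟨e, he⟩ hmem
    induction e using Sym2.ind with
    | _ u v =>
      have hne : (none : Option (Fin m × Fin n)) ∉ s(u, v) := by
        simpa [E2] using hmem
      rw [Sym2.mem_iff] at hne
      push_neg at hne
      match u, v, he, hne with
      | some a, some b, he, _ =>
        have hnbr : nbr a b := he
        rcases nbr_or hnbr with h | h
        · exact ⟨(a, b), by simpa using h, rfl⟩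
        · exact ⟨(b, a), by simpa using h, Subtype.ext Sym2.eq_swap⟩
  · intro p _
    rfl

lemma cutDelta_pair (A : Finset (Option (Fin m × Fin n))) (a b : Fin m × Fin n) :
    cutDelta A s(some a, some b) =
      cutDelta A s(none, some a) * (1 - cutDelta A s(none, some b))
      + cutDelta A s(none, some b) * (1 - cutDelta A s(none, some a)) := by
  by_cases h0 : (none : Option (Fin m × Fin n)) ∈ A <;>
    by_cases ha : (some a : Option (Fin m × Fin n)) ∈ A <;>
    by_cases hb : (some b : Option (Fin m × Fin n)) ∈ A <;>
    simp [cutDelta_mk, h0, ha, hb]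

lemma projE1_cutVec (A : Finset (Option (Fin m × Fin n))) (c : Fin m × Fin n) :
    projE1 m n (cutVec m n A) c = cutDelta A s(none, some c) := rfl

lemma sum_E1_cutVec (A : Finset (Option (Fin m × Fin n))) :
    ∑ e ∈ E1 m n, cutVec m n A e = T1R (projE1 m n (cutVec m n A)) := by
  rw [T1R]
  exact sum_E1_eq (cutDelta A)

lemma sum_E2_cutVec (A : Finset (Option (Fin m × Fin n))) :
    ∑ e ∈ E2 m n, cutVec m n A e = T2R (projE1 m n (cutVec m n A)) := by
  rw [T2R]
  rw [show (∑ e ∈ E2 m n, cutVec m n A e) =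
      ∑ e ∈ E2 m n, cutDelta A (e : Sym2 (Option (Fin m × Fin n))) from rfl]
  rw [sum_E2_eq (cutDelta A)]
  exact Finset.sum_congr rfl fun p _ => cutDelta_pair A p.1 p.2

lemma eq_cutVec_of_zeroOne {y : (suspGraph m n).edgeSet → ℝ}
    (hy : y ∈ cutPolytope m n) (h01 : ∀ e, y e = 0 ∨ y e = 1) :
    ∃ A, y = cutVec m n A := by
  rw [cutPolytope, convexHull_eq] at hy
  obtain ⟨ι, t, w, z, hw0, hw1, hz, hcm⟩ := hy
  rw [Finset.centerMass_eq_of_sum_1 _ _ hw1] at hcm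
  have hex : ∃ i ∈ t, w i ≠ 0 := by
    by_contra h
    push_neg at h
    have : ∑ i ∈ t, w i = 0 := Finset.sum_eq_zero h
    rw [hw1] at this; norm_num at this
  obtain ⟨i₀, hi₀t, hi₀⟩ := hex
  have hz01 : ∀ i ∈ t, ∀ e, z i e = 0 ∨ z i e = 1 := by
    intro i hi e
    obtain ⟨A, hA⟩ := hz i hi
    rw [hA]
    exact cutDelta_zero_or_one A _
  have key : ∀ e, y e = z i₀ e := by
    intro e
    have hye : y e = ∑ i ∈ t, w i * z i e := by
      have := congrFun hcm e
      simpa [Finset.sum_apply] using this.symm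
    rcases h01 e with h0 | h1
    · have hall : ∀ i ∈ t, w i * z i e = 0 := by
        refine (Finset.sum_eq_zero_iff_of_nonneg ?_).mp ?_
        · intro i hi
          have hz0 : 0 ≤ z i e := by rcases hz01 i hi e with h | h <;> rw [h] <;> norm_num
          exact mul_nonneg (hw0 i hi) hz0
        · rw [← hye]; exact h0
      rcases mul_eq_zero.mp (hall i₀ hi₀t) with h | h
      · exact absurd h hi₀
      · rw [h0, h]
    · have hall : ∀ i ∈ t, w i * (1 - z i e) = 0 := by
        refine (Finset.sum_eq_zero_iff_of_nonneg ?_).mp ?_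
        · intro i hi
          have h1z : 0 ≤ 1 - z i e := by
            rcases hz01 i hi e with h | h <;> rw [h] <;> norm_num
          exact mul_nonneg (hw0 i hi) h1z
        · have hexp : ∑ i ∈ t, w i * (1 - z i e) =
              (∑ i ∈ t, w i) - ∑ i ∈ t, w i * z i e := by
            rw [← Finset.sum_sub_distrib]
            exact Finset.sum_congr rfl fun i _ => by ring
          rw [hexp, hw1, ← hye, h1, sub_self]
      rcases mul_eq_zero.mp (hall i₀ hi₀t) with h | h
      · exact absurd h hi₀
      · rw [h1]
        linarith
  obtain ⟨A, hA⟩ := hz i₀ hi₀t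
  exact ⟨A, (funext key).trans hA⟩

end Aux

theorem proj_sigmaPrime_eq_sigma (m n : ℕ) (hm : 1 ≤ m) (hn : 1 ≤ n) (t1 t2 : ℕ) :
    projE1 m n '' SigmaPrime m n t1 t2 = SigmaFiber m n t1 t2 := by
  classical
  ext x
  constructor
  · rintro ⟨y, ⟨hpoly, h01, hT1, hT2⟩, rfl⟩
    obtain ⟨A, rfl⟩ := eq_cutVec_of_zeroOne hpoly h01
    refine ⟨fun c => cutDelta_zero_or_one A _, ?_, ?_⟩
    · rw [← sum_E1_cutVec A]; exact hT1
    · rw [← sum_E2_cutVec A]; exact hT2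
  · rintro ⟨h01, hT1, hT2⟩
    set A : Finset (Option (Fin m × Fin n)) :=
      Finset.univ.filter (fun o => ∃ c, o = some c ∧ x c = 1) with hAdef
    have hnone : (none : Option (Fin m × Fin n)) ∉ A := by simp [hAdef]
    have hsome : ∀ c, ((some c : Option (Fin m × Fin n)) ∈ A) ↔ x c = 1 := by
      intro c
      simp only [hAdef, Finset.mem_filter, Finset.mem_univ, true_and]
      constructor
      · rintro ⟨c', hc', h⟩
        rwa [Option.some_injective _ hc'] at *
      · intro h; exact ⟨c, rfl, h⟩
    have hproj : projE1 m n (cutVec m n A) = x := by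
      funext c
      rw [projE1_cutVec, cutDelta_mk]
      rcases h01 c with h | h
      · have hc : ¬ ((some c : Option (Fin m × Fin n)) ∈ A) := by
          rw [hsome, h]; norm_num
        rw [if_neg hnone, if_neg hc, h]
      · rw [if_neg hnone, if_pos ((hsome c).mpr h), h]
    refine ⟨cutVec m n A, ⟨?_, ?_, ?_, ?_⟩, hproj⟩
    · exact subset_convexHull ℝ _ ⟨A, rfl⟩
    · intro e; exact cutDelta_zero_or_one A _
    · rw [sum_E1_cutVec A, hproj]; exact hT1
    · rw [sum_E2_cutVec A, hproj]; exact hT2
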